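/- Let ≻_HP be a hope-and-prepare preference with representation (u, C_HP, D_HP) and let ≻_B be a Bewley preference with representation (u, C_B), with the same utility function u. Then ≻_B is more conservative than ≻_HP if and only if C_HP ∪ D_HP ⊆ C_B. -/

import Mathlib

/-!
Framework: Anscombe–Aumann acts, finitely additive probability measures,
simple acts, hope-and-prepare preferences (Bastianello–Hill style setup).
-/

open Set

section Framework

variable (S : Type*) [MeasurableSpace S]

/-- The measurable sets (events) of `S`, as a subtype. -/
abbrev MSet := {A : Set S // MeasurableSet A}

/-- Finitely additive probability measures on `(S, Σ)`, viewed as real-valued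
set functions on events.  The weak* topology is the topology of pointwise
convergence on events, i.e. the product topology on `MSet S → ℝ`. -/
def ProbCharges : Set (MSet S → ℝ) :=
  {p | (∀ A, 0 ≤ p A) ∧ p ⟨Set.univ, MeasurableSet.univ⟩ = 1 ∧
    ∀ A B : MSet S, Disjoint A.1 B.1 → p ⟨A.1 ∪ B.1, A.2.union B.2⟩ = p A + p B}

end Framework

section Fns

variable {S : Type*} [MeasurableSpace S]

/-- `φ : S → ℝ` is a measurable simple function (an element of `B₀(Σ)`). -/
def IsSimpleFn (φ : S → ℝ) : Prop :=
  (Set.range φ).Finite ∧ ∀ y : ℝ, MeasurableSet (φ ⁻¹' {y})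

/-- The integral `∫ φ dp` of a simple function `φ` against a finitely additive
measure `p` (junk value `0` if `φ` is not simple). -/
noncomputable def fInt (p : MSet S → ℝ) (φ : S → ℝ) : ℝ :=
  @dite _ (IsSimpleFn φ) (Classical.dec _)
    (fun h => ∑ y ∈ h.1.toFinset, y * p ⟨φ ⁻¹' {y}, h.2 y⟩) (fun _ => 0)

/-- A functional `I : B₀(Σ) → ℝ` is monotonic. -/
def MonotonicFn (I : (S → ℝ) → ℝ) : Prop :=
  ∀ φ ψ, IsSimpleFn φ → IsSimpleFn ψ → (∀ s, φ s ≤ ψ s) → I φ ≤ I ψ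

/-- A functional `I : B₀(Σ) → ℝ` is constant-linear: `I(aφ + b) = a I(φ) + b`
for `a ≥ 0`, `b ∈ ℝ`. -/
def ConstLinearFn (I : (S → ℝ) → ℝ) : Prop :=
  ∀ φ, IsSimpleFn φ → ∀ a : ℝ, 0 ≤ a → ∀ b : ℝ,
    I (fun s => a * φ s + b) = a * I φ + b

end Fns

section Acts

variable {S : Type*} [MeasurableSpace S] {V : Type*} [AddCommGroup V] [Module ℝ V]

/-- `f : S → V` is a simple act with outcomes in `X`: it is `X`-valued,
takes finitely many values and is `Σ`-measurable. -/
def IsAct (X : Set V) (f : S → V) : Prop :=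
  (∀ s, f s ∈ X) ∧ (Set.range f).Finite ∧ ∀ v : V, MeasurableSet (f ⁻¹' {v})

/-- Pointwise mixture `αf + (1-α)g` of two acts. -/
def mixAct (α : ℝ) (f g : S → V) : S → V := fun s => α • f s + (1 - α) • g s

/-- The constant act with outcome `x`. -/
def constAct (S : Type*) {V : Type*} (x : V) : S → V := fun _ => x

/-- `u : V → ℝ` is affine on the convex set `X`. -/
def IsAffineOn (u : V → ℝ) (X : Set V) : Prop :=
  ∀ x ∈ X, ∀ y ∈ X, ∀ α : ℝ, 0 ≤ α → α ≤ 1 →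
    u (α • x + (1 - α) • y) = α * u x + (1 - α) * u y

/-- `u` is non-constant on `X`. -/
def NonConstOn (u : V → ℝ) (X : Set V) : Prop := ∃ x ∈ X, ∃ y ∈ X, u x ≠ u y

/-- Expected utility `∫ u(f) dp` of the act `f` under the measure `p`. -/
noncomputable def EU (u : V → ℝ) (f : S → V) (p : MSet S → ℝ) : ℝ :=
  fInt p (fun s => u (f s))

/-- Worst-case expected utility of `f` over the set of scenarios `C`. -/
noncomputable def minEU (u : V → ℝ) (C : Set (MSet S → ℝ)) (f : S → V) : ℝ :=
  sInf (EU u f '' C)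

/-- Best-case expected utility of `f` over the set of scenarios `D`. -/
noncomputable def maxEU (u : V → ℝ) (D : Set (MSet S → ℝ)) (f : S → V) : ℝ :=
  sSup (EU u f '' D)

/-- `f` and `g` are incomparable (`f ⋈ g`). -/
def Incomp (R : (S → V) → (S → V) → Prop) (f g : S → V) : Prop := ¬ R f g ∧ ¬ R g f

end Acts

section Axioms

variable {S : Type*} [MeasurableSpace S] {V : Type*} [AddCommGroup V] [Module ℝ V]
variable (X : Set V) (R : (S → V) → (S → V) → Prop)

/-- Axiom 1: `≻` is asymmetric and transitive on acts, and its restriction to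
constant acts is non-trivial and negatively transitive. -/
def PrefAx1 : Prop :=
  (∀ f g, IsAct X f → IsAct X g → R f g → ¬ R g f) ∧
  (∀ f g h, IsAct X f → IsAct X g → IsAct X h → R f g → R g h → R f h) ∧
  (∃ x ∈ X, ∃ y ∈ X, R (constAct S x) (constAct S y)) ∧
  (∀ x ∈ X, ∀ y ∈ X, ∀ z ∈ X, ¬ R (constAct S x) (constAct S y) →
    ¬ R (constAct S y) (constAct S z) → ¬ R (constAct S x) (constAct S z))

/-- Axiom 2 (continuity). -/
def PrefAx2 : Prop :=
  ∀ f g h, IsAct X f → IsAct X g → IsAct X h →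
    IsOpen {α : Set.Icc (0 : ℝ) 1 | R (mixAct (α : ℝ) f g) h} ∧
    IsOpen {α : Set.Icc (0 : ℝ) 1 | R h (mixAct (α : ℝ) f g)}

/-- Axiom 3 (certainty independence). -/
def PrefAx3 : Prop :=
  ∀ f g, IsAct X f → IsAct X g → ∀ x ∈ X, ∀ α : ℝ, 0 < α → α < 1 →
    (R f g ↔ R (mixAct α f (constAct S x)) (mixAct α g (constAct S x)))

/-- Axiom 4: for any outcome `x`, the upper and lower contour sets at the
constant act `x` are convex. -/
def PrefAx4 : Prop :=
  ∀ x ∈ X,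
    (∀ f g, IsAct X f → IsAct X g → R f (constAct S x) → R g (constAct S x) →
      ∀ α : ℝ, 0 ≤ α → α ≤ 1 → R (mixAct α f g) (constAct S x)) ∧
    (∀ f g, IsAct X f → IsAct X g → R (constAct S x) f → R (constAct S x) g →
      ∀ α : ℝ, 0 ≤ α → α ≤ 1 → R (constAct S x) (mixAct α f g))

/-- Axiom 5 (monotonicity). -/
def PrefAx5 : Prop :=
  ∀ f g, IsAct X f → IsAct X g →
    (∀ s : S, R (constAct S (f s)) (constAct S (g s))) → R f g

/-- Axiom 6: if every outcome incomparable to `f` is incomparable to `g`,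
then `f` and `g` are incomparable. -/
def PrefAx6 : Prop :=
  ∀ f g, IsAct X f → IsAct X g →
    (∀ x ∈ X, Incomp R f (constAct S x) → Incomp R g (constAct S x)) → Incomp R f g

/-- Axiom 7: if `f ⋈ x`, `x ≻ g`, `g ⋈ y` and `f ≻ y`, then `f ≻ g`. -/
def PrefAx7 : Prop :=
  ∀ f g, IsAct X f → IsAct X g → ∀ x ∈ X, ∀ y ∈ X,
    Incomp R f (constAct S x) → R (constAct S x) g →
    Incomp R g (constAct S y) → R f (constAct S y) → R f g

end Axioms

section Reps

variable {S : Type*} [MeasurableSpace S] {V : Type*} [AddCommGroup V] [Module ℝ V]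

/-- `(u, C, D)` is a hope-and-prepare representation of `R`. -/
def IsHPRep (X : Set V) (R : (S → V) → (S → V) → Prop) (u : V → ℝ)
    (C D : Set (MSet S → ℝ)) : Prop :=
  IsAffineOn u X ∧ NonConstOn u X ∧
  C.Nonempty ∧ D.Nonempty ∧ C ⊆ ProbCharges S ∧ D ⊆ ProbCharges S ∧
  IsCompact C ∧ IsCompact D ∧ Convex ℝ C ∧ Convex ℝ D ∧ (C ∩ D).Nonempty ∧
  ∀ f g, IsAct X f → IsAct X g →
    (R f g ↔ (minEU u C g < minEU u C f ∧ maxEU u D g < maxEU u D f))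

/-- `(u, C)` is a Bewley representation of `R`. -/
def IsBewleyRep (X : Set V) (R : (S → V) → (S → V) → Prop) (u : V → ℝ)
    (C : Set (MSet S → ℝ)) : Prop :=
  IsAffineOn u X ∧ NonConstOn u X ∧
  C.Nonempty ∧ C ⊆ ProbCharges S ∧ IsCompact C ∧ Convex ℝ C ∧
  ∀ f g, IsAct X f → IsAct X g → (R f g ↔ ∀ p ∈ C, EU u g p < EU u f p)

/-- `(u, C, D)` is a twofold multi-prior representation of `R`. -/
def IsTwofoldRep (X : Set V) (R : (S → V) → (S → V) → Prop) (u : V → ℝ)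
    (C D : Set (MSet S → ℝ)) : Prop :=
  IsAffineOn u X ∧ NonConstOn u X ∧
  C.Nonempty ∧ D.Nonempty ∧ C ⊆ ProbCharges S ∧ D ⊆ ProbCharges S ∧
  IsCompact C ∧ IsCompact D ∧ Convex ℝ C ∧ Convex ℝ D ∧ (C ∩ D).Nonempty ∧
  ∀ f g, IsAct X f → IsAct X g → (R f g ↔ maxEU u D g < minEU u C f)

end Reps

/-!
If `C_HP ∪ D_HP ⊆ C_B` and `f ≻_B g`, evaluating at a minimiser of `∫ u(f)` over `C_HP` and at a
maximiser of `∫ u(g)` over `D_HP` gives `f ≻_HP g`.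

Conversely, let `q ∈ C_HP ∪ D_HP` lie outside `C_B`. The weak* topology is the product topology on
`MSet S → ℝ`, whose continuous linear functionals are finite combinations of evaluations at events;
so Hahn–Banach separates `q` from `C_B` by the integral of a simple function `φ`, which may be
rescaled to take values in `[0, 1]`. Mixing two outcomes of different utilities according to `φ`
yields an act `f` and a constant act `z` with `f ≻_B z` although `f` is worse than `z` under `q`
(or the same with the roles of `f` and `z` exchanged), contradicting `f ≻_HP z` when `q ∈ C_HP`
(`z ≻_HP f` when `q ∈ D_HP`).
-/

open MeasureTheory

section ChargeIntegral

variable {S : Type*} [MeasurableSpace S]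

-- The set function whose extension `SimpleFunc.setToSimpleFunc` is the integral `fInt p`.
open Classical in
noncomputable def chargeWeight (p : MSet S → ℝ) (A : Set S) : ℝ →L[ℝ] ℝ :=
  (if h : MeasurableSet A then p ⟨A, h⟩ else 0) • ContinuousLinearMap.id ℝ ℝ

-- Every set has finite measure under `0`, so this is plain finite additivity.
lemma finMeasAdditive_chargeWeight {p : MSet S → ℝ} (hp : p ∈ ProbCharges S) :
    FinMeasAdditive (0 : Measure S) (chargeWeight p) := by
  intro A B hA hB _ _ hAB
  simp only [chargeWeight, dif_pos hA, dif_pos hB, dif_pos (hA.union hB),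
    hp.2.2 ⟨A, hA⟩ ⟨B, hB⟩ hAB, add_smul]

lemma fInt_eq_sum_range (p : MSet S → ℝ) (φ : SimpleFunc S ℝ) :
    fInt p φ = ∑ y ∈ φ.range, y * p ⟨φ ⁻¹' {y}, φ.measurableSet_fiber y⟩ :=
  dif_pos ⟨φ.finite_range, φ.measurableSet_fiber⟩

lemma fInt_eq_setToSimpleFunc (p : MSet S → ℝ) (φ : SimpleFunc S ℝ) :
    fInt p φ = SimpleFunc.setToSimpleFunc (chargeWeight p) φ := by
  rw [fInt_eq_sum_range, SimpleFunc.setToSimpleFunc]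
  refine Finset.sum_congr rfl fun y _ => ?_
  simp [chargeWeight, dif_pos (φ.measurableSet_fiber y), mul_comm]

lemma continuous_fInt (φ : SimpleFunc S ℝ) : Continuous fun p : MSet S → ℝ => fInt p φ := by
  simp_rw [fInt_eq_sum_range]
  exact continuous_finsetSum _ fun y _ => continuous_const.mul (continuous_apply _)

noncomputable def chargeIntegral {p : MSet S → ℝ} (hp : p ∈ ProbCharges S) :
    SimpleFunc S ℝ →ₗ[ℝ] ℝ where
  toFun φ := fInt p φ
  map_add' φ ψ := by
    simp only [fInt_eq_setToSimpleFunc]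
    exact SimpleFunc.setToSimpleFunc_add _ (finMeasAdditive_chargeWeight hp)
      integrable_zero_measure integrable_zero_measure
  map_smul' c φ := by
    simp only [fInt_eq_setToSimpleFunc]
    exact SimpleFunc.setToSimpleFunc_smul_real _ (finMeasAdditive_chargeWeight hp) c
      integrable_zero_measure

lemma chargeIntegral_apply {p : MSet S → ℝ} (hp : p ∈ ProbCharges S) (φ : SimpleFunc S ℝ) :
    chargeIntegral hp φ = fInt p φ := rfl

lemma chargeWeight_empty {p : MSet S → ℝ} (hp : p ∈ ProbCharges S) : chargeWeight p ∅ = 0 :=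
  (finMeasAdditive_chargeWeight hp).map_empty_eq_zero

lemma fInt_const {p : MSet S → ℝ} (hp : p ∈ ProbCharges S) (c : ℝ) :
    fInt p (SimpleFunc.const S c) = c := by
  rw [fInt_eq_setToSimpleFunc, SimpleFunc.setToSimpleFunc_const _ (chargeWeight_empty hp)]
  simp [chargeWeight, hp.2.1]

lemma fInt_piecewise_const_zero {p : MSet S → ℝ} (hp : p ∈ ProbCharges S) (A : MSet S) (c : ℝ) :
    fInt p (SimpleFunc.piecewise A.1 A.2 (.const S c) (.const S 0)) = c * p A := by
  rw [fInt_eq_setToSimpleFunc, SimpleFunc.setToSimpleFunc_indicator _ (chargeWeight_empty hp)]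
  simp [chargeWeight, A.2, mul_comm]

end ChargeIntegral

section Separation

lemma ContinuousLinearMap.exists_finsupp_eq_sum {ι : Type*} (L : (ι → ℝ) →L[ℝ] ℝ) :
    ∃ c : ι →₀ ℝ, ∀ x, L x = c.sum fun i a => a * x i := by
  have hL : L.toLinearMap ∈ Submodule.span ℝ (Set.range fun i => LinearMap.proj i) :=
    (LinearMap.mem_span_iff_continuous _).2 L.continuous
  obtain ⟨c, hc⟩ := Finsupp.mem_span_range_iff_exists_finsupp.1 hL
  refine ⟨c, fun x => ?_⟩
  rw [← L.coe_coe, ← hc]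
  simp [Finsupp.sum]

variable {S : Type*} [MeasurableSpace S]

lemma exists_simpleFunc_fInt_eq_sum (c : MSet S →₀ ℝ) :
    ∃ φ : SimpleFunc S ℝ, ∀ p ∈ ProbCharges S, fInt p φ = c.sum fun A a => a * p A := by
  refine ⟨c.sum fun A a => .piecewise A.1 A.2 (.const S a) (.const S 0), fun p hp => ?_⟩
  rw [← chargeIntegral_apply hp, Finsupp.sum, map_sum]
  exact Finset.sum_congr rfl fun A _ => fInt_piecewise_const_zero hp A (c A)

lemma exists_pos_mul_add_half_mem_Icc {s : Set ℝ} (hs : Bornology.IsBounded s) :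
    ∃ a > 0, ∀ t ∈ s, a * t + 1 / 2 ∈ Set.Icc (0 : ℝ) 1 := by
  obtain ⟨M, hM⟩ := hs.subset_closedBall 0
  set a : ℝ := (2 * (|M| + 1))⁻¹
  have ha : 0 < a := by positivity
  refine ⟨a, ha, fun t ht => ?_⟩
  have htM : |t| ≤ |M| + 1 := by
    have := hM ht
    rw [Metric.mem_closedBall, Real.dist_eq, sub_zero] at this
    linarith [le_abs_self M]
  have hat : |a * t| ≤ 1 / 2 :=
    calc |a * t| = a * |t| := by rw [abs_mul, abs_of_pos ha]
      _ ≤ a * (|M| + 1) := by gcongr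
      _ = 1 / 2 := by simp only [a]; field_simp
  constructor <;> linarith [abs_le.1 hat]

lemma exists_simpleFunc_separating {C : Set (MSet S → ℝ)} {q : MSet S → ℝ}
    (hCP : C ⊆ ProbCharges S) (hqP : q ∈ ProbCharges S) (hC : Convex ℝ C) (hCc : IsClosed C)
    (hq : q ∉ C) :
    ∃ φ : SimpleFunc S ℝ, (∀ s, φ s ∈ Set.Icc (0 : ℝ) 1) ∧
      ∃ ρ ∈ Set.Icc (0 : ℝ) 1, (∀ p ∈ C, fInt p φ < ρ) ∧ ρ < fInt q φ := by
  obtain ⟨L, r, hLC, hLq⟩ := geometric_hahn_banach_closed_point hC hCc hq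
  obtain ⟨c, hc⟩ := L.exists_finsupp_eq_sum
  obtain ⟨φ₀, hφ₀⟩ := exists_simpleFunc_fInt_eq_sum c
  obtain ⟨a, ha, haI⟩ := exists_pos_mul_add_half_mem_Icc
    ((φ₀.finite_range.union (Set.finite_singleton r)).isBounded)
  set φ : SimpleFunc S ℝ := a • φ₀ + SimpleFunc.const S (1 / 2 : ℝ)
  have hφ : ∀ p ∈ ProbCharges S, fInt p φ = a * L p + 1 / 2 := by
    intro p hp
    rw [← chargeIntegral_apply hp, map_add, map_smul, chargeIntegral_apply, chargeIntegral_apply,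
      fInt_const hp, hφ₀ p hp, hc, smul_eq_mul]
  refine ⟨φ, fun s => haI _ (.inl ⟨s, rfl⟩), a * r + 1 / 2, haI _ (.inr rfl), fun p hp => ?_, ?_⟩
  · rw [hφ p (hCP hp)]
    linarith [mul_lt_mul_of_pos_left (hLC p hp) ha]
  · rw [hφ q hqP]
    linarith [mul_lt_mul_of_pos_left hLq ha]

end Separation

section Acts

variable {S : Type*} [MeasurableSpace S] {V : Type*}

lemma MeasureTheory.SimpleFunc.isAct {X : Set V} (f : SimpleFunc S V) (hf : ∀ s, f s ∈ X) :
    IsAct X f :=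
  ⟨hf, f.finite_range, f.measurableSet_fiber⟩

def IsAct.toSimpleFunc {X : Set V} {f : S → V} (hf : IsAct X f) : SimpleFunc S V :=
  ⟨f, hf.2.2, hf.2.1⟩

lemma isAct_const {X : Set V} {x : V} (hx : x ∈ X) : IsAct X (constAct S x) :=
  (SimpleFunc.const S x).isAct fun _ => hx

lemma continuous_EU {X : Set V} (u : V → ℝ) {f : S → V} (hf : IsAct X f) :
    Continuous (EU u f) :=
  continuous_fInt (hf.toSimpleFunc.map u)

lemma EU_const (u : V → ℝ) (x : V) {p : MSet S → ℝ} (hp : p ∈ ProbCharges S) :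
    EU u (constAct S x) p = u x :=
  fInt_const hp (u x)

variable {u : V → ℝ} {C : Set (MSet S → ℝ)}

lemma image_EU_const (hC : C.Nonempty) (hCP : C ⊆ ProbCharges S) (x : V) :
    EU u (constAct S x) '' C = {u x} := by
  rw [Set.image_congr fun p hp => EU_const u x (hCP hp), hC.image_const]

lemma minEU_const (hC : C.Nonempty) (hCP : C ⊆ ProbCharges S) (x : V) :
    minEU u C (constAct S x) = u x := by
  rw [minEU, image_EU_const hC hCP, csInf_singleton]

lemma maxEU_const (hC : C.Nonempty) (hCP : C ⊆ ProbCharges S) (x : V) :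
    maxEU u C (constAct S x) = u x := by
  rw [maxEU, image_EU_const hC hCP, csSup_singleton]

variable {X : Set V} {f g : S → V}

lemma minEU_le (hC : IsCompact C) (hf : IsAct X f) {p : MSet S → ℝ} (hp : p ∈ C) :
    minEU u C f ≤ EU u f p :=
  csInf_le (hC.image (continuous_EU u hf)).bddBelow ⟨p, hp, rfl⟩

lemma le_maxEU (hC : IsCompact C) (hf : IsAct X f) {p : MSet S → ℝ} (hp : p ∈ C) :
    EU u f p ≤ maxEU u C f :=
  le_csSup (hC.image (continuous_EU u hf)).bddAbove ⟨p, hp, rfl⟩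

lemma minEU_lt_minEU (hC : IsCompact C) (hCne : C.Nonempty) (hf : IsAct X f) (hg : IsAct X g)
    (hgf : ∀ p ∈ C, EU u g p < EU u f p) : minEU u C g < minEU u C f := by
  obtain ⟨p, hp, hpf⟩ := (hC.image (continuous_EU u hf)).sInf_mem (hCne.image _)
  calc minEU u C g ≤ EU u g p := minEU_le hC hg hp
    _ < EU u f p := hgf p hp
    _ = minEU u C f := hpf

lemma maxEU_lt_maxEU (hC : IsCompact C) (hCne : C.Nonempty) (hf : IsAct X f) (hg : IsAct X g)
    (hgf : ∀ p ∈ C, EU u g p < EU u f p) : maxEU u C g < maxEU u C f := by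
  obtain ⟨p, hp, hpg⟩ := (hC.image (continuous_EU u hg)).sSup_mem (hCne.image _)
  calc maxEU u C g = EU u g p := hpg.symm
    _ < EU u f p := hgf p hp
    _ ≤ maxEU u C f := le_maxEU hC hf hp

lemma NonConstOn.exists_lt (h : NonConstOn u X) : ∃ x ∈ X, ∃ y ∈ X, u x < u y := by
  obtain ⟨x, hx, y, hy, hxy⟩ := h
  rcases hxy.lt_or_gt with hlt | hlt
  exacts [⟨x, hx, y, hy, hlt⟩, ⟨y, hy, x, hx, hlt⟩]

variable [AddCommGroup V] [Module ℝ V] {Rb : (S → V) → (S → V) → Prop} {CB : Set (MSet S → ℝ)}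

lemma exists_act_EU_sub_const_eq (hX : Convex ℝ X)
    (hu : IsAffineOn u X) {x y : V} (hx : x ∈ X) (hy : y ∈ X) (φ : SimpleFunc S ℝ)
    (hφ : ∀ s, φ s ∈ Set.Icc (0 : ℝ) 1) {ρ : ℝ} (hρ : ρ ∈ Set.Icc (0 : ℝ) 1) :
    ∃ f z, IsAct X f ∧ z ∈ X ∧
      ∀ p ∈ ProbCharges S, EU u f p - u z = (u y - u x) * (fInt p φ - ρ) := by
  set G : ℝ → V := fun t => t • y + (1 - t) • x
  have hG : ∀ t ∈ Set.Icc (0 : ℝ) 1, G t ∈ X := fun t ht =>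
    hX hy hx ht.1 (by linarith [ht.2]) (by ring)
  have huG : ∀ t ∈ Set.Icc (0 : ℝ) 1, u (G t) = (u y - u x) * t + u x := fun t ht => by
    rw [hu y hy x hx t ht.1 ht.2]; ring
  refine ⟨φ.map G, G ρ, (φ.map G).isAct fun s => hG _ (hφ s), hG ρ hρ, fun p hp => ?_⟩
  have hfu : (φ.map G).map u = (u y - u x) • φ + SimpleFunc.const S (u x) := by
    ext s
    exact huG _ (hφ s)
  change fInt p ((φ.map G).map u) - _ = _
  rw [hfu, ← chargeIntegral_apply hp, map_add, map_smul, chargeIntegral_apply,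
    chargeIntegral_apply, fInt_const hp, smul_eq_mul, huG ρ hρ]
  ring

lemma subset_of_bewley_imp_lt_minEU (hX : Convex ℝ X) (hC : IsCompact C)
    (hCP : C ⊆ ProbCharges S) (hb : IsBewleyRep X Rb u CB)
    (h : ∀ f z, IsAct X f → z ∈ X → Rb f (constAct S z) → u z < minEU u C f) : C ⊆ CB := by
  obtain ⟨hu, hnc, -, hBP, hBc, hBconv, hB⟩ := hb
  intro q hq
  by_contra hqB
  obtain ⟨x, hx, y, hy, hxy⟩ := hnc.exists_lt
  obtain ⟨φ, hφ, ρ, hρ, hBφ, hqφ⟩ :=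
    exists_simpleFunc_separating hBP (hCP hq) hBconv hBc.isClosed hqB
  -- mixing from `y` down to `x` reverses the separation
  obtain ⟨f, z, hf, hz, hfz⟩ := exists_act_EU_sub_const_eq hX hu hy hx φ hφ hρ
  have hRb : Rb f (constAct S z) := (hB _ _ hf (isAct_const hz)).2 fun p hp => by
    rw [EU_const u z (hBP hp)]
    nlinarith [hfz p (hBP hp), hBφ p hp]
  nlinarith [h f z hf hz hRb, minEU_le (u := u) hC hf hq, hfz q (hCP hq)]

lemma subset_of_bewley_imp_maxEU_lt (hX : Convex ℝ X) (hC : IsCompact C)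
    (hCP : C ⊆ ProbCharges S) (hb : IsBewleyRep X Rb u CB)
    (h : ∀ f z, IsAct X f → z ∈ X → Rb (constAct S z) f → maxEU u C f < u z) : C ⊆ CB := by
  obtain ⟨hu, hnc, -, hBP, hBc, hBconv, hB⟩ := hb
  intro q hq
  by_contra hqB
  obtain ⟨x, hx, y, hy, hxy⟩ := hnc.exists_lt
  obtain ⟨φ, hφ, ρ, hρ, hBφ, hqφ⟩ :=
    exists_simpleFunc_separating hBP (hCP hq) hBconv hBc.isClosed hqB
  obtain ⟨f, z, hf, hz, hfz⟩ := exists_act_EU_sub_const_eq hX hu hx hy φ hφ hρ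
  have hRb : Rb (constAct S z) f := (hB _ _ (isAct_const hz) hf).2 fun p hp => by
    rw [EU_const u z (hBP hp)]
    nlinarith [hfz p (hBP hp), hBφ p hp]
  nlinarith [h f z hf hz hRb, le_maxEU (u := u) hC hf hq, hfz q (hCP hq)]

end Acts

section Statement

variable {S : Type*} [MeasurableSpace S] [Nonempty S]
variable {V : Type*} [AddCommGroup V] [Module ℝ V]

theorem statement4_general (X : Set V) (hX : Convex ℝ X)
    (Rhp Rb : (S → V) → (S → V) → Prop) (u : V → ℝ)
    (CHP DHP CB : Set (MSet S → ℝ))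
    (hhp : IsHPRep X Rhp u CHP DHP) (hb : IsBewleyRep X Rb u CB) :
    (∀ f g, IsAct X f → IsAct X g → Rb f g → Rhp f g) ↔ CHP ∪ DHP ⊆ CB := by
  obtain ⟨-, -, hCne, hDne, hCP, hDP, hCc, hDc, -, -, -, hHP⟩ := hhp
  constructor
  · intro hcons
    refine Set.union_subset
      (subset_of_bewley_imp_lt_minEU hX hCc hCP hb fun f z hf hz hfz => ?_)
      (subset_of_bewley_imp_maxEU_lt hX hDc hDP hb fun f z hf hz hzf => ?_)
    · have := ((hHP _ _ hf (isAct_const hz)).1 (hcons _ _ hf (isAct_const hz) hfz)).1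
      rwa [minEU_const hCne hCP] at this
    · have := ((hHP _ _ (isAct_const hz) hf).1 (hcons _ _ (isAct_const hz) hf hzf)).2
      rwa [maxEU_const hDne hDP] at this
  · intro hsub f g hf hg hfg
    obtain ⟨-, -, -, -, -, -, hB⟩ := hb
    rw [hB f g hf hg] at hfg
    exact (hHP f g hf hg).2 ⟨minEU_lt_minEU hCc hCne hf hg fun p hp => hfg p (hsub (.inl hp)),
      maxEU_lt_maxEU hDc hDne hf hg fun p hp => hfg p (hsub (.inr hp))⟩

/-- Proposition 1(i): a Bewley preference `≻_B` with
representation `(u, C_B)` is more conservative than the hope-and-prepare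
preference `≻_HP` with representation `(u, C_HP, D_HP)` iff
`C_HP ∪ D_HP ⊆ C_B`. -/
theorem statement4 (X : Set V) (hX : Convex ℝ X) (hX2 : ∃ x ∈ X, ∃ y ∈ X, x ≠ y)
    (Rhp Rb : (S → V) → (S → V) → Prop) (u : V → ℝ)
    (CHP DHP CB : Set (MSet S → ℝ))
    (hhp : IsHPRep X Rhp u CHP DHP) (hb : IsBewleyRep X Rb u CB) :
    (∀ f g, IsAct X f → IsAct X g → Rb f g → Rhp f g) ↔ CHP ∪ DHP ⊆ CB :=
  statement4_general X hX Rhp Rb u CHP DHP CB hhp hb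

end Statement
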